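/- arXiv:1308.1695 — 2 statements merged into one kernel-verified Lean document; each statement's English description precedes it below -/
import Mathlib

section
/- In the two-parameter resonant transseries model described in the context, suppose the family (F^{(n)}_g) satisfies the equations, ε : ℕ² → {1, −1} is a homomorphism of additive-to-multiplicative monoids with ε(1,1) = 1, and the holomorphic ambiguities respect the symmetry: ev₀(F^{(n₁,n₂)}_g) = ε(n)·(−1)^{g+1}·ev₀(F^{(n₂,n₁)}_g) for every sector n and every g ≥ 0. Then every diagonal sector (r,r) with r ≥ 1 — a sector whose total instanton action (r − r)·A vanishes — satisfies F^{(r,r)}_g = 0 for every even g; equivalently, the sector series F^{(r,r)}(g_s) = Σ_{g≥0} g_s^{g+1} F^{(r,r)}_g contains only even powers of g_s, i.e. it has a closed-string genus expansion in g_s². -/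
/-!
By induction on `g`, every sector satisfies `F^{(n)}_g = ε(n) (-1)^(g+1) F^{(n*)}_g`. Under
`n ↦ n*` the action `n̄` changes sign, so `𝒟^{(n)}_h` picks up the sign `(-1)^h`, while the
quadratic terms are permuted by `m ↦ m*`. By the induction hypothesis the right-hand sides of
the equations for `n` and `n*` therefore agree up to the factor `ε(n) (-1)^(g+1)`, and the
difference `X` of the two sides of the claim solves `(∂ - n̄²(δA)²/2) X = 0`. On the coefficient
of `T^k` this is a linear equation `dp/dS = b p`, whose only solution with `p(0) = 0` over a
`ℚ`-algebra is zero; and `ev₀ X = 0` is the hypothesis on the holomorphic ambiguities.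
On a diagonal sector `n = n*` and `ε(r,r) = 1`, so for even `g` the symmetry reads `F = -F`.
-/

open Polynomial

noncomputable section

/-- The ring `M = R[S,T]`: polynomials in the propagator `S` (inner variable) and the
instanton exponential `T` (outer variable). -/
abbrev TS (R : Type*) [CommRing R] : Type _ := Polynomial (Polynomial R)

/-- The propagator `S = S^{zz}` inside `R[S,T]`. -/
def Sv {R : Type*} [CommRing R] : TS R := Polynomial.C Polynomial.X

/-- The instanton exponential `T = exp((1/2)(δA)²S)` inside `R[S,T]`. -/
def Tv {R : Type*} [CommRing R] : TS R := Polynomial.X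

/-- The embedding `R → R[S,T]`. -/
def cc {R : Type*} [CommRing R] (r : R) : TS R := Polynomial.C (Polynomial.C r)

/-- `n̄ = n₁ − n₂`, so that the total instanton action of the sector `n = (n₁,n₂)`
is `n̄·A` (the actions being `A₁ = A`, `A₂ = −A`). -/
def nbar (n : ℕ × ℕ) : ℤ := (n.1 : ℤ) - (n.2 : ℤ)

/-- The operators `𝒟^{(n)}_h` of the nonperturbative holomorphic anomaly equations in the
two-parameter resonant model, for the sector with `n̄ = nb`. -/
def Dop2 {R : Type*} [CommRing R] [Algebra ℚ R] (δ : Derivation ℚ R R)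
    (c ft al A : R) (p : ℕ → Polynomial R) (Dh : Derivation ℚ (TS R) (TS R))
    (nb : ℤ) (h : ℕ) (x : TS R) : TS R :=
  if h = 1 then
    (2 : ℚ)⁻¹ • ((nb : TS R) * (cc (δ (δ A)) - (cc ft - cc c * Sv) * cc (δ A)) * x)
      + (nb : TS R) * cc (δ A) * (Dh x + ((2 : ℚ)⁻¹ • (cc c * Sv) + cc al) * x)
  else if h = 2 then
    -((2 : ℚ)⁻¹ • (Dh (Dh x) - (cc ft - cc c * Sv) * Dh x))
      - ((2 : ℚ)⁻¹ • (cc c * Sv) + cc al) * Dh x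
  else if h % 2 = 1 then
    (nb : TS R) * cc (δ A) * Polynomial.C (p ((h + 1) / 2)) * x
  else
    -(Polynomial.C (p (h / 2)) * Dh x)

theorem Polynomial.eq_zero_of_derivative_eq_C_mul {R : Type*} [CommRing R] [Algebra ℚ R]
    {p : R[X]} {b : R} (h : derivative p = C b * p) (h0 : p.eval 0 = 0) : p = 0 := by
  ext j
  rw [coeff_zero]
  induction j with
  | zero => rwa [coeff_zero_eq_eval_zero]
  | succ j ih =>
    have hj := congrArg (coeff · j) h
    simp only [coeff_derivative, coeff_C_mul, ih, mul_zero] at hj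
    have hunit : IsUnit ((j : R) + 1) := by
      simpa using (isUnit_iff_ne_zero.mpr (by positivity : (j : ℚ) + 1 ≠ 0)).map (algebraMap ℚ R)
    exact hunit.mul_left_eq_zero.mp hj

section Propagator

variable {R : Type*} [CommRing R] [Algebra ℚ R] {Dp : Derivation ℚ (TS R) (TS R)}

theorem derivation_C_eq_C_derivative (hDpC : ∀ r : R, Dp (cc r) = 0)
    (hDpS : Dp (Sv (R := R)) = 1) (q : R[X]) : Dp (C q) = C (derivative q) := by
  induction q using Polynomial.induction_on' with
  | add q q' hq hq' => rw [C_add, map_add, hq, hq', derivative_add, C_add]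
  | monomial k r =>
    have hmon : (C (monomial k r) : TS R) = cc r * Sv ^ k := by
      rw [← C_mul_X_pow_eq_monomial, C_mul, map_pow]
      rfl
    rw [hmon, Derivation.leibniz, hDpC, Derivation.leibniz_pow, hDpS, derivative_monomial,
      ← C_mul_X_pow_eq_monomial, C_mul, map_pow]
    simp only [cc, Sv, smul_eq_mul, nsmul_eq_mul, C_mul, map_natCast]
    ring

theorem derivation_X_pow {u : R} (hDpT : Dp (Tv (R := R)) = (2 : ℚ)⁻¹ • (cc u ^ 2 * Tv))
    (k : ℕ) : Dp (X ^ k : TS R) = ((k : ℚ) / 2) • (cc u ^ 2 * X ^ k) := by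
  rcases k with _ | k
  · simp
  · rw [Derivation.leibniz_pow, show (X : TS R) = Tv from rfl, hDpT, Nat.add_sub_cancel,
      smul_eq_mul, mul_smul_comm, ← Nat.cast_smul_eq_nsmul ℚ, smul_smul, pow_succ]
    congr 1
    ring

theorem coeff_derivation (hDpC : ∀ r : R, Dp (cc r) = 0) (hDpS : Dp (Sv (R := R)) = 1)
    {u : R} (hDpT : Dp (Tv (R := R)) = (2 : ℚ)⁻¹ • (cc u ^ 2 * Tv)) (x : TS R) (k : ℕ) :
    (Dp x).coeff k = derivative (x.coeff k) + C (((k : ℚ) / 2) • u ^ 2) * x.coeff k := by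
  induction x using Polynomial.induction_on' with
  | add x y hx hy =>
    simp only [map_add, coeff_add, hx, hy, mul_add]
    abel
  | monomial j q =>
    have hmon : Dp (C q * X ^ j) = C (derivative q + C (((j : ℚ) / 2) • u ^ 2) * q) * X ^ j := by
      rw [Derivation.leibniz, derivation_X_pow hDpT, derivation_C_eq_C_derivative hDpC hDpS]
      simp only [Algebra.smul_def, Polynomial.algebraMap_apply, smul_eq_mul, C_add, C_mul,
        map_pow, cc]
      ring
    rw [← C_mul_X_pow_eq_monomial, hmon, coeff_C_mul_X_pow, coeff_C_mul_X_pow]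
    split_ifs with hkj
    · rw [hkj]
    · simp

theorem eq_zero_of_derivation_eq_C_mul {u a : R} (hDpC : ∀ r : R, Dp (cc r) = 0)
    (hDpS : Dp (Sv (R := R)) = 1) (hDpT : Dp (Tv (R := R)) = (2 : ℚ)⁻¹ • (cc u ^ 2 * Tv))
    {x : TS R} (hx : Dp x = cc a * x) (h0 : x.map (evalRingHom 0) = 0) : x = 0 := by
  ext k : 1
  refine eq_zero_of_derivative_eq_C_mul (b := a - ((k : ℚ) / 2) • u ^ 2) ?_ ?_
  · have hk := congrArg (coeff · k) hx
    simp only [coeff_derivation hDpC hDpS hDpT, cc, coeff_C_mul] at hk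
    rw [C_sub, sub_mul, ← hk, add_sub_cancel_right]
  · simpa using congrArg (coeff · k) h0

end Propagator

theorem apply_diag_eq_one {M : Type*} [Monoid M] {ε : ℕ × ℕ → M}
    (hε : ∀ m m', ε (m + m') = ε m * ε m') (hε11 : ε (1, 1) = 1) (r : ℕ) : ε (r, r) = 1 := by
  induction r with
  | zero =>
    rw [Prod.mk_zero_zero]
    simpa [hε11] using (hε (1, 1) 0).symm
  | succ r ih =>
    rw [show ((r + 1, r + 1) : ℕ × ℕ) = (r, r) + (1, 1) from rfl, hε, ih, hε11, one_mul]

theorem nbar_swap (m : ℕ × ℕ) : nbar m.swap = -nbar m := by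
  simp [nbar]

/-- The `m` with `n = m + (n - m)` a splitting into two nonzero sectors. -/
def properParts (n : ℕ × ℕ) : Finset (ℕ × ℕ) :=
  (Finset.range (n.1 + 1) ×ˢ Finset.range (n.2 + 1)).filter (fun m => m ≠ 0 ∧ m ≠ n)

theorem mem_properParts {m n : ℕ × ℕ} : m ∈ properParts n ↔ m ≤ n ∧ m ≠ 0 ∧ m ≠ n := by
  simp [properParts, Prod.le_def]

theorem swap_mem_properParts_swap {m n : ℕ × ℕ} :
    m.swap ∈ properParts n.swap ↔ m ∈ properParts n := by
  simp only [mem_properParts, Prod.swap_le_swap, Ne, Prod.swap_eq_iff_eq_swap, Prod.swap_zero,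
    Prod.swap_swap]

theorem sub_ne_zero_of_mem_properParts {m n : ℕ × ℕ} (hm : m ∈ properParts n) : n - m ≠ 0 := by
  obtain ⟨hle, -, hne⟩ := mem_properParts.mp hm
  rw [Ne, tsub_eq_zero_iff_le]
  exact fun hnm => hne (le_antisymm hle hnm)

section Symmetry

variable {R : Type*} [CommRing R]

def SwapSymmetricAt (ε : ℕ × ℕ → ℤ) (F : ℕ × ℕ → ℤ → TS R) (j : ℤ) : Prop :=
  ∀ m : ℕ × ℕ, m ≠ 0 → F m j = (ε m * ((j + 1).negOnePow : ℤ)) • F m.swap j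

theorem swapSymmetricAt_of_neg {ε : ℕ × ℕ → ℤ} {F : ℕ × ℕ → ℤ → TS R}
    (hF : ∀ m j, j < 0 → F m j = 0) {j : ℤ} (hj : j < 0) : SwapSymmetricAt ε F j := by
  intro m _
  rw [hF m j hj, hF m.swap j hj, smul_zero]

end Symmetry

section Sectors

variable {R : Type*} [CommRing R] [Algebra ℚ R]

theorem Dop2_zsmul (δ : Derivation ℚ R R) (c ft al A : R) (p : ℕ → R[X])
    (Dh : Derivation ℚ (TS R) (TS R)) (nb : ℤ) (h : ℕ) (z : ℤ) (x : TS R) :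
    Dop2 δ c ft al A p Dh nb h (z • x) = z • Dop2 δ c ft al A p Dh nb h x := by
  unfold Dop2
  split_ifs <;> (try simp only [map_zsmul]) <;> simp only [Algebra.smul_def] <;> ring

theorem Dop2_neg (δ : Derivation ℚ R R) (c ft al A : R) (p : ℕ → R[X])
    (Dh : Derivation ℚ (TS R) (TS R)) (nb : ℤ) (h : ℕ) (x : TS R) :
    Dop2 δ c ft al A p Dh (-nb) h x = (-1 : ℤ) ^ h • Dop2 δ c ft al A p Dh nb h x := by
  unfold Dop2
  split_ifs with h1 h2 h3
  · simp only [h1, pow_one, neg_smul, one_smul, Int.cast_neg]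
    simp only [Algebra.smul_def]
    ring
  · simp [h2]
  · simp only [Odd.neg_one_pow (Nat.odd_iff.mpr h3), neg_smul, one_smul, Int.cast_neg]
    ring
  · simp [Even.neg_one_pow (Nat.even_iff.mpr (Nat.mod_two_ne_one.mp h3))]

def pairFactor (Dh : Derivation ℚ (TS R) (TS R)) (u : R) (F : ℕ × ℕ → ℤ → TS R) (m : ℕ × ℕ)
    (i j : ℤ) : TS R :=
  Dh (F m i) - (nbar m : TS R) * cc u * F m j

theorem pairFactor_eq_smul_swap {ε : ℕ × ℕ → ℤ} {F : ℕ × ℕ → ℤ → TS R}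
    (Dh : Derivation ℚ (TS R) (TS R)) (u : R) {i j : ℤ} (hij : j = i + 1)
    (hi : SwapSymmetricAt ε F i) (hj : SwapSymmetricAt ε F j) {m : ℕ × ℕ} (hm : m ≠ 0) :
    pairFactor Dh u F m i j = (ε m * (j.negOnePow : ℤ)) • pairFactor Dh u F m.swap i j := by
  subst hij
  rw [pairFactor, pairFactor, hi m hm, hj m hm, map_zsmul, nbar_swap, Int.negOnePow_succ (i + 1)]
  simp only [zsmul_eq_mul, Units.val_neg, Int.cast_mul, Int.cast_neg]
  ring

theorem sum_Dop2_eq_smul_swap (δ : Derivation ℚ R R) (c ft al A : R) (p : ℕ → R[X])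
    (Dh : Derivation ℚ (TS R) (TS R)) {ε : ℕ × ℕ → ℤ} {F : ℕ × ℕ → ℤ → TS R} {g : ℕ}
    (hsym : ∀ j < (g : ℤ), SwapSymmetricAt ε F j) {n : ℕ × ℕ} (hn : n ≠ 0) :
    ∑ h ∈ Finset.Icc 1 g, Dop2 δ c ft al A p Dh (nbar n) h (F n ((g : ℤ) - h))
      = (ε n * (((g : ℤ) + 1).negOnePow : ℤ)) •
          ∑ h ∈ Finset.Icc 1 g,
            Dop2 δ c ft al A p Dh (nbar n.swap) h (F n.swap ((g : ℤ) - h)) := by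
  rw [Finset.smul_sum]
  refine Finset.sum_congr rfl fun h hh => ?_
  have hlt : (g : ℤ) - h < g := by
    have := (Finset.mem_Icc.mp hh).1
    omega
  rw [hsym _ hlt n hn, Dop2_zsmul, show nbar n = -nbar n.swap by rw [nbar_swap, neg_neg],
    Dop2_neg, smul_smul, mul_assoc, ← Int.coe_negOnePow_natCast, ← Units.val_mul,
    ← Int.negOnePow_add, show (g : ℤ) - h + 1 + h = g + 1 by ring]

theorem sum_pairFactor_mul_eq_smul_swap (Dh : Derivation ℚ (TS R) (TS R)) (u : R)
    {ε : ℕ × ℕ → ℤ} {F : ℕ × ℕ → ℤ → TS R} {g : ℕ}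
    (hsym : ∀ j < (g : ℤ), SwapSymmetricAt ε F j) (hε : ∀ m m', ε (m + m') = ε m * ε m')
    (n : ℕ × ℕ) :
    ∑ m ∈ properParts n, ∑ h ∈ Finset.range g,
        pairFactor Dh u F m ((h : ℤ) - 1) h
          * pairFactor Dh u F (n - m) ((g : ℤ) - 2 - h) ((g : ℤ) - 1 - h)
      = (ε n * (((g : ℤ) + 1).negOnePow : ℤ)) •
          ∑ m ∈ properParts n.swap, ∑ h ∈ Finset.range g,
            pairFactor Dh u F m ((h : ℤ) - 1) h
              * pairFactor Dh u F (n.swap - m) ((g : ℤ) - 2 - h) ((g : ℤ) - 1 - h) := by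
  rw [Finset.smul_sum]
  refine Finset.sum_equiv (Equiv.prodComm ℕ ℕ) (fun m => swap_mem_properParts_swap.symm)
    fun m hm => ?_
  obtain ⟨hle, hm0, -⟩ := mem_properParts.mp hm
  have hnm := sub_ne_zero_of_mem_properParts hm
  rw [Equiv.prodComm_apply, ← Prod.swap_sub, Finset.smul_sum]
  refine Finset.sum_congr rfl fun h hh => ?_
  have hh' : (h : ℤ) < g := by exact_mod_cast Finset.mem_range.mp hh
  rw [pairFactor_eq_smul_swap Dh u (by ring) (hsym _ (by omega)) (hsym _ (by omega)) hm0,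
    pairFactor_eq_smul_swap Dh u (by ring) (hsym _ (by omega)) (hsym _ (by omega)) hnm,
    smul_mul_smul_comm]
  congr 1
  calc ε m * (h : ℤ).negOnePow * (ε (n - m) * ((g : ℤ) - 1 - h).negOnePow)
      = ε (m + (n - m)) * (((h : ℤ) + ((g : ℤ) - 1 - h)).negOnePow : ℤ) := by
        rw [hε, Int.negOnePow_add]
        push_cast
        ring
    _ = ε n * (((g : ℤ) + 1).negOnePow : ℤ) := by
        rw [add_tsub_cancel_of_le hle, (Int.negOnePow_eq_iff _ ((g : ℤ) + 1)).mpr ⟨-1, by ring⟩]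

def anomalySource (δ : Derivation ℚ R R) (c ft al A : R) (p : ℕ → R[X])
    (Dh : Derivation ℚ (TS R) (TS R)) (F : ℕ × ℕ → ℤ → TS R) (n : ℕ × ℕ) (g : ℕ) : TS R :=
  -(∑ h ∈ Finset.Icc 1 g, Dop2 δ c ft al A p Dh (nbar n) h (F n ((g : ℤ) - (h : ℤ))))
    + (2 : ℚ)⁻¹ • ∑ m ∈ properParts n, ∑ h ∈ Finset.range g,
        pairFactor Dh (δ A) F m ((h : ℤ) - 1) h
          * pairFactor Dh (δ A) F (n - m) ((g : ℤ) - 2 - (h : ℤ)) ((g : ℤ) - 1 - (h : ℤ))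

def SolvesAnomalyEquations (δ : Derivation ℚ R R) (c ft al A : R) (p : ℕ → R[X])
    (Dp Dh : Derivation ℚ (TS R) (TS R)) (F : ℕ × ℕ → ℤ → TS R) : Prop :=
  ∀ n : ℕ × ℕ, n ≠ 0 → ∀ g : ℕ,
    Dp (F n g) - (2 : ℚ)⁻¹ • ((nbar n : TS R) ^ 2 * cc (δ A) ^ 2 * F n g)
      = anomalySource δ c ft al A p Dh F n g

theorem anomalySource_eq_smul_swap (δ : Derivation ℚ R R) (c ft al A : R) (p : ℕ → R[X])
    (Dh : Derivation ℚ (TS R) (TS R)) {ε : ℕ × ℕ → ℤ} {F : ℕ × ℕ → ℤ → TS R} {g : ℕ}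
    (hsym : ∀ j < (g : ℤ), SwapSymmetricAt ε F j) (hε : ∀ m m', ε (m + m') = ε m * ε m')
    {n : ℕ × ℕ} (hn : n ≠ 0) :
    anomalySource δ c ft al A p Dh F n g
      = (ε n * (((g : ℤ) + 1).negOnePow : ℤ)) • anomalySource δ c ft al A p Dh F n.swap g := by
  rw [anomalySource, anomalySource, sum_Dop2_eq_smul_swap δ c ft al A p Dh hsym hn,
    sum_pairFactor_mul_eq_smul_swap Dh (δ A) hsym hε n, smul_add, smul_neg, smul_comm]

theorem swapSymmetricAt_of_forall_lt {δ : Derivation ℚ R R} {c ft al A : R} {p : ℕ → R[X]}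
    {Dp Dh : Derivation ℚ (TS R) (TS R)} {F : ℕ × ℕ → ℤ → TS R} {ε : ℕ × ℕ → ℤ}
    (hDpC : ∀ r : R, Dp (cc r) = 0) (hDpS : Dp (Sv (R := R)) = 1)
    (hDpT : Dp (Tv (R := R)) = (2 : ℚ)⁻¹ • (cc (δ A) ^ 2 * Tv))
    (heq : SolvesAnomalyEquations δ c ft al A p Dp Dh F)
    (hε : ∀ m m', ε (m + m') = ε m * ε m')
    (hamb : ∀ n : ℕ × ℕ, n ≠ 0 → ∀ g : ℕ,
      (F n g).map (evalRingHom 0) = (ε n * (-1) ^ (g + 1)) • (F n.swap g).map (evalRingHom 0))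
    {g : ℕ} (hsym : ∀ j < (g : ℤ), SwapSymmetricAt ε F j) : SwapSymmetricAt ε F g := by
  intro n hn
  have hn' : n.swap ≠ 0 := fun h => hn (by simpa using congrArg Prod.swap h)
  rw [← sub_eq_zero]
  refine eq_zero_of_derivation_eq_C_mul hDpC hDpS hDpT
    (a := (2 : ℚ)⁻¹ • ((nbar n : R) ^ 2 * δ A ^ 2)) ?_ ?_
  · have e1 := eq_add_of_sub_eq' (heq n hn g)
    have e2 := eq_add_of_sub_eq' (heq n.swap hn' g)
    rw [nbar_swap] at e2
    rw [map_sub, map_zsmul, e1, e2, anomalySource_eq_smul_swap δ c ft al A p Dh hsym hε hn]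
    simp only [cc, Algebra.smul_def, Polynomial.algebraMap_apply, map_mul, map_pow, map_intCast,
      Int.cast_neg]
    ring
  · rw [Polynomial.map_sub, hamb n hn g, zsmul_eq_mul, zsmul_eq_mul, Polynomial.map_mul,
      Polynomial.map_intCast, ← Int.coe_negOnePow_natCast, Nat.cast_add, Nat.cast_one, sub_self]

theorem forall_lt_swapSymmetricAt {δ : Derivation ℚ R R} {c ft al A : R} {p : ℕ → R[X]}
    {Dp Dh : Derivation ℚ (TS R) (TS R)} {F : ℕ × ℕ → ℤ → TS R} {ε : ℕ × ℕ → ℤ}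
    (hDpC : ∀ r : R, Dp (cc r) = 0) (hDpS : Dp (Sv (R := R)) = 1)
    (hDpT : Dp (Tv (R := R)) = (2 : ℚ)⁻¹ • (cc (δ A) ^ 2 * Tv))
    (hF : ∀ m j, j < 0 → F m j = 0) (heq : SolvesAnomalyEquations δ c ft al A p Dp Dh F)
    (hε : ∀ m m', ε (m + m') = ε m * ε m')
    (hamb : ∀ n : ℕ × ℕ, n ≠ 0 → ∀ g : ℕ,
      (F n g).map (evalRingHom 0) = (ε n * (-1) ^ (g + 1)) • (F n.swap g).map (evalRingHom 0)) :
    ∀ g : ℕ, ∀ j < (g : ℤ), SwapSymmetricAt ε F j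
  | 0 => fun _ hj => swapSymmetricAt_of_neg hF hj
  | g + 1 => fun j hj => by
    have ih := forall_lt_swapSymmetricAt hDpC hDpS hDpT hF heq hε hamb g
    rcases (show j ≤ g by omega).lt_or_eq with hjg | rfl
    · exact ih j hjg
    · exact swapSymmetricAt_of_forall_lt hDpC hDpS hDpT heq hε hamb ih

end Sectors

theorem diagonal_sector_genus_expansion_general
    {R : Type*} [CommRing R] [Algebra ℚ R]
    (δ : Derivation ℚ R R) (c ft al A : R)
    (p : ℕ → Polynomial R)
    (Dp Dh : Derivation ℚ (TS R) (TS R))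
    (hDpC : ∀ r : R, Dp (cc r) = 0)
    (hDpS : Dp (Sv (R := R)) = 1)
    (hDpT : Dp (Tv (R := R)) = (2 : ℚ)⁻¹ • (cc (δ A) ^ 2 * Tv))
    (F : ℕ × ℕ → ℤ → TS R)
    (hFneg : ∀ (n : ℕ × ℕ) (j : ℤ), j < 0 → F n j = 0)
    (heq : ∀ n : ℕ × ℕ, n ≠ 0 → ∀ g : ℕ,
      Dp (F n (g : ℤ)) - (2 : ℚ)⁻¹ • (((nbar n : TS R)) ^ 2 * cc (δ A) ^ 2 * F n (g : ℤ))
        = -(∑ h ∈ Finset.Icc 1 g, Dop2 δ c ft al A p Dh (nbar n) h (F n ((g : ℤ) - (h : ℤ))))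
          + (2 : ℚ)⁻¹ •
            ∑ m ∈ (Finset.range (n.1 + 1) ×ˢ Finset.range (n.2 + 1)).filter
                (fun m => m ≠ 0 ∧ m ≠ n),
              ∑ h ∈ Finset.range g,
                (Dh (F m ((h : ℤ) - 1)) - (nbar m : TS R) * cc (δ A) * F m (h : ℤ))
                * (Dh (F (n - m) ((g : ℤ) - 2 - (h : ℤ)))
                    - (nbar (n - m) : TS R) * cc (δ A) * F (n - m) ((g : ℤ) - 1 - (h : ℤ))))
    (ε : ℕ × ℕ → ℤ)
    (hεadd : ∀ m m' : ℕ × ℕ, ε (m + m') = ε m * ε m')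
    (hε11 : ε (1, 1) = 1)
    (hamb : ∀ n : ℕ × ℕ, n ≠ 0 → ∀ g : ℕ,
      (F n (g : ℤ)).map (Polynomial.evalRingHom (0 : R))
        = (ε n * (-1) ^ (g + 1)) • (F (n.2, n.1) (g : ℤ)).map (Polynomial.evalRingHom (0 : R))) :
    ∀ r : ℕ, 1 ≤ r → ∀ g : ℕ, Even g → F (r, r) (g : ℤ) = 0 := by
  intro r hr g hg
  have hsym := forall_lt_swapSymmetricAt hDpC hDpS hDpT hFneg heq hεadd hamb (g + 1) g
    (by omega) (r, r) (by simpa using Nat.one_le_iff_ne_zero.mp hr)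
  rw [apply_diag_eq_one hεadd hε11, Int.negOnePow_odd _ (by exact_mod_cast hg.add_one)] at hsym
  have := IsAddTorsionFree.of_module_rat (TS R)
  exact self_eq_neg.mp (by simpa using hsym)

/-- In the two-parameter resonant model, if the holomorphic ambiguities respect the
`ℤ₂`-symmetry (with `ε(1,1) = 1`), then every diagonal sector `(r,r)` — whose total
instanton action vanishes — satisfies `F^{(r,r)}_g = 0` for all even `g`, i.e. the sector
series `Σ_g g_s^{g+1} F^{(r,r)}_g` has a closed-string genus expansion in `g_s²`. -/
theorem diagonal_sector_genus_expansion
    {R : Type*} [CommRing R] [IsDomain R] [Algebra ℚ R]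
    (δ : Derivation ℚ R R) (c f ft al A : R) (hA : δ A ≠ 0)
    (p : ℕ → Polynomial R) (hp : ∀ h : ℕ, 2 ≤ h → (p h).natDegree ≤ 3 * h - 2)
    (Dp Dh : Derivation ℚ (TS R) (TS R))
    (hDpC : ∀ r : R, Dp (cc r) = 0)
    (hDpS : Dp (Sv (R := R)) = 1)
    (hDpT : Dp (Tv (R := R)) = (2 : ℚ)⁻¹ • (cc (δ A) ^ 2 * Tv))
    (hDhC : ∀ r : R, Dh (cc r) = cc (δ r))
    (hDhS : Dh (Sv (R := R)) = cc f - cc c * Sv ^ 2)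
    (hDhT : Dh (Tv (R := R)) = (cc (δ A) * cc (δ (δ A)) * Sv
        + (2 : ℚ)⁻¹ • (cc (δ A) ^ 2 * (cc f - cc c * Sv ^ 2))) * Tv)
    (F : ℕ × ℕ → ℤ → TS R)
    (hFneg : ∀ (n : ℕ × ℕ) (j : ℤ), j < 0 → F n j = 0)
    (heq : ∀ n : ℕ × ℕ, n ≠ 0 → ∀ g : ℕ,
      Dp (F n (g : ℤ)) - (2 : ℚ)⁻¹ • (((nbar n : TS R)) ^ 2 * cc (δ A) ^ 2 * F n (g : ℤ))
        = -(∑ h ∈ Finset.Icc 1 g, Dop2 δ c ft al A p Dh (nbar n) h (F n ((g : ℤ) - (h : ℤ))))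
          + (2 : ℚ)⁻¹ •
            ∑ m ∈ (Finset.range (n.1 + 1) ×ˢ Finset.range (n.2 + 1)).filter
                (fun m => m ≠ 0 ∧ m ≠ n),
              ∑ h ∈ Finset.range g,
                (Dh (F m ((h : ℤ) - 1)) - (nbar m : TS R) * cc (δ A) * F m (h : ℤ))
                * (Dh (F (n - m) ((g : ℤ) - 2 - (h : ℤ)))
                    - (nbar (n - m) : TS R) * cc (δ A) * F (n - m) ((g : ℤ) - 1 - (h : ℤ))))
    (ε : ℕ × ℕ → ℤ)
    (hεpm : ∀ m : ℕ × ℕ, ε m = 1 ∨ ε m = -1)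
    (hεadd : ∀ m m' : ℕ × ℕ, ε (m + m') = ε m * ε m')
    (hε11 : ε (1, 1) = 1)
    (hamb : ∀ n : ℕ × ℕ, n ≠ 0 → ∀ g : ℕ,
      (F n (g : ℤ)).map (Polynomial.evalRingHom (0 : R))
        = (ε n * (-1) ^ (g + 1)) • (F (n.2, n.1) (g : ℤ)).map (Polynomial.evalRingHom (0 : R))) :
    ∀ r : ℕ, 1 ≤ r → ∀ g : ℕ, Even g → F (r, r) (g : ℤ) = 0 :=
  diagonal_sector_genus_expansion_general δ c ft al A p Dp Dh hDpC hDpS hDpT F hFneg heq ε hεadd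
    hε11 hamb

end
end

section
/- Fix κ ≥ 1, a nonzero n ∈ ℕ^κ, and a function b : ℕ^κ∖{0} → ℝ. For a nonzero vector v ∈ ℕ^κ and a symmetric matrix M belonging to the image { A(r) : r ∈ P(v) }, define λ_b(v, M) := min { Σ_m r(m)·b(m) : r ∈ P(v), A(r) = M } (a minimum over a finite nonempty set). Then for every M ∈ { A(r) : r ∈ P(n) } with M ≠ n⊗n, the set of decompositions D(M) := { (m, m', M₁, M₂) : m + m' = n, m ≠ 0, m' ≠ 0, M₁ ∈ { A(r₁) : r₁ ∈ P(m) }, M₂ ∈ { A(r₂) : r₂ ∈ P(m') }, M₁ + M₂ = M } is nonempty, and λ_b(n, M) = min { λ_b(m, M₁) + λ_b(m', M₂) : (m, m', M₁, M₂) ∈ D(M) }. -/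
/-!
Concatenating partitions of `m` and `m'` gives a partition of `m + m'` whose `A`-matrix and
`b`-weight are the sums of theirs, so `λ_b(n, M) ≤ λ_b(m, M₁) + λ_b(m', M₂)` on all of `D(M)`.
Conversely, a minimizing partition `r` of `n` with `A(r) = M ≠ n ⊗ n` is not the trivial
partition, so splitting off one of its parts `m` leaves a partition of `n - m ≠ 0`; this
decomposition of `r` attains the bound.
-/

/-- A vector partition of a nonzero `n ∈ ℕ^κ`: a finitely supported function
`r : ℕ^κ → ℕ` with `r 0 = 0` and `Σ_m r(m)·m = n` (componentwise). -/
def IsVPartition {κ : ℕ} (n : Fin κ → ℕ) (r : (Fin κ → ℕ) →₀ ℕ) : Prop :=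
  r 0 = 0 ∧ r.sum (fun m k => k • m) = n

/-- The `A`-matrix of a vector partition: `A(r)_{αβ} = Σ_m r(m)·m_α·m_β`. -/
def AMat {κ : ℕ} (r : (Fin κ → ℕ) →₀ ℕ) : Matrix (Fin κ) (Fin κ) ℕ :=
  Matrix.of fun α β => r.sum fun m k => k * (m α * m β)

/-- The set of `b`-weights of vector partitions of `v` with `A`-matrix `M`. -/
def lamSet {κ : ℕ} (b : (Fin κ → ℕ) → ℝ) (v : Fin κ → ℕ)
    (M : Matrix (Fin κ) (Fin κ) ℕ) : Set ℝ :=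
  {x | ∃ r, IsVPartition v r ∧ AMat r = M ∧ x = r.sum fun m k => (k : ℝ) * b m}

/-- `λ_b(v, M)`: the minimum of `Σ_m r(m)·b(m)` over the vector partitions `r` of `v`
with `A(r) = M` (a minimum of a finite nonempty set, realized as an infimum). -/
noncomputable def lamB {κ : ℕ} (b : (Fin κ → ℕ) → ℝ) (v : Fin κ → ℕ)
    (M : Matrix (Fin κ) (Fin κ) ℕ) : ℝ :=
  sInf (lamSet b v M)

open Finsupp

section AMat

variable {κ : ℕ}

theorem AMat_add (r₁ r₂ : (Fin κ → ℕ) →₀ ℕ) : AMat (r₁ + r₂) = AMat r₁ + AMat r₂ := by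
  ext α β
  simp only [AMat, Matrix.of_apply, Matrix.add_apply]
  exact sum_add_index' (fun _ => zero_mul _) (fun _ k l => add_mul k l _)

theorem AMat_single_one (m : Fin κ → ℕ) :
    AMat (single m 1) = Matrix.of fun α β => m α * m β := by
  ext α β
  simp [AMat, sum_single_index]

end AMat

namespace IsVPartition

variable {κ : ℕ} {n m m' : Fin κ → ℕ} {r r₁ r₂ : (Fin κ → ℕ) →₀ ℕ}

theorem smul_le (h : IsVPartition n r) (m : Fin κ → ℕ) : r m • m ≤ n := by
  by_cases hm : m ∈ r.support
  · rw [← h.2]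
    exact Finset.single_le_sum (f := fun m => r m • m) (fun _ _ => zero_le) hm
  · rw [notMem_support_iff.mp hm, zero_smul]
    exact zero_le

theorem eq_zero (h : IsVPartition 0 r) : r = 0 := by
  ext m
  have hrm : r m • m = 0 := le_antisymm (h.smul_le m) zero_le
  rcases smul_eq_zero.mp hrm with hr | rfl
  · exact hr
  · exact h.1

theorem add (h₁ : IsVPartition m r₁) (h₂ : IsVPartition m' r₂) :
    IsVPartition (m + m') (r₁ + r₂) := by
  refine ⟨by simp [h₁.1, h₂.1], ?_⟩
  rw [sum_add_index' (h := fun m k => k • m) (fun _ => zero_smul _ _)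
    (fun _ k l => add_smul k l _), h₁.2, h₂.2]

theorem single_one (hm : m ≠ 0) : IsVPartition m (single m 1) :=
  ⟨single_eq_of_ne' hm, by rw [sum_single_index (zero_smul ℕ m), one_smul]⟩

/-- Each part `m` of a partition of `n` lies in `Iic n` and occurs at most `∑ α, n α` times. -/
theorem finite_setOf (n : Fin κ → ℕ) : {r | IsVPartition n r}.Finite := by
  classical
  refine (Set.finite_Iic (indicator (Finset.Iic n) fun _ _ => ∑ α, n α)).subset ?_
  intro r hr m
  rcases Nat.eq_zero_or_pos (r m) with h0 | hpos
  · simp [h0]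
  have hm : m ≠ 0 := by rintro rfl; exact hpos.ne' hr.1
  obtain ⟨α, hα⟩ := Function.ne_iff.mp hm
  have hle := hr.smul_le m
  have hmn : m ∈ Finset.Iic n :=
    Finset.mem_Iic.mpr ((le_smul_of_one_le_left zero_le hpos).trans hle)
  rw [indicator_of_mem hmn]
  calc r m ≤ r m * m α := Nat.le_mul_of_pos_right _ (Nat.pos_of_ne_zero hα)
    _ ≤ n α := hle α
    _ ≤ ∑ α, n α := Finset.single_le_sum (fun _ _ => zero_le) (Finset.mem_univ α)

theorem exists_single_add (hr : IsVPartition n r)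
    (hA : AMat r ≠ Matrix.of fun α β => n α * n β) :
    ∃ m m' r', m + m' = n ∧ m ≠ 0 ∧ m' ≠ 0 ∧ IsVPartition m' r' ∧
      single m 1 + r' = r := by
  classical
  have hr0 : r ≠ 0 := by
    rintro rfl
    obtain rfl : n = 0 := by rw [← hr.2, sum_zero_index]
    exact hA (by ext; simp [AMat])
  obtain ⟨m, hm⟩ := support_nonempty_iff.mpr hr0
  have hm0 : m ≠ 0 := by rintro rfl; exact mem_support_iff.mp hm hr.1
  obtain ⟨r', rfl⟩ : ∃ r', r = single m 1 + r' :=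
    exists_add_of_le (single_le_iff.mpr (Nat.one_le_iff_ne_zero.mpr (mem_support_iff.mp hm)))
  have hr' : IsVPartition (r'.sum fun m k => k • m) r' := ⟨by simpa [hm0] using hr.1, rfl⟩
  have hsum : m + r'.sum (fun m k => k • m) = n := ((single_one hm0).add hr').2.symm.trans hr.2
  refine ⟨m, _, r', hsum, hm0, fun h0 => hA ?_, hr', rfl⟩
  rw [h0] at hr' hsum
  rw [hr'.eq_zero, add_zero, AMat_single_one, ← hsum, add_zero]

end IsVPartition

theorem Finsupp.sum_add_natCast_mul {α R : Type*} [Semiring R] (b : α → R) (r₁ r₂ : α →₀ ℕ) :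
    ((r₁ + r₂).sum fun m k => (k : R) * b m)
      = (r₁.sum fun m k => (k : R) * b m) + r₂.sum fun m k => (k : R) * b m :=
  sum_add_index' (fun _ => by simp) (fun _ k l => by rw [Nat.cast_add, add_mul])

section lamB

variable {κ : ℕ} (b : (Fin κ → ℕ) → ℝ) {v m m' : Fin κ → ℕ}
  {M M₁ M₂ : Matrix (Fin κ) (Fin κ) ℕ}

theorem lamSet_finite (v : Fin κ → ℕ) (M : Matrix (Fin κ) (Fin κ) ℕ) :
    (lamSet b v M).Finite := by
  refine ((IsVPartition.finite_setOf v).image fun r => r.sum fun m k => (k : ℝ) * b m).subset ?_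
  rintro x ⟨r, hr, -, rfl⟩
  exact ⟨r, hr, rfl⟩

theorem lamB_le {x : ℝ} (hx : x ∈ lamSet b v M) : lamB b v M ≤ x :=
  csInf_le (lamSet_finite b v M).bddBelow hx

theorem lamB_mem (hne : (lamSet b v M).Nonempty) : lamB b v M ∈ lamSet b v M :=
  hne.csInf_mem (lamSet_finite b v M)

theorem lamB_add_le (h₁ : (lamSet b m M₁).Nonempty) (h₂ : (lamSet b m' M₂).Nonempty) :
    lamB b (m + m') (M₁ + M₂) ≤ lamB b m M₁ + lamB b m' M₂ := by
  obtain ⟨s₁, hs₁, rfl, hw₁⟩ := lamB_mem b h₁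
  obtain ⟨s₂, hs₂, rfl, hw₂⟩ := lamB_mem b h₂
  refine lamB_le b ⟨s₁ + s₂, hs₁.add hs₂, AMat_add s₁ s₂, ?_⟩
  rw [hw₁, hw₂, Finsupp.sum_add_natCast_mul]

end lamB

theorem lamB_recursion_general {κ : ℕ} (b : (Fin κ → ℕ) → ℝ)
    (n : Fin κ → ℕ) (M : Matrix (Fin κ) (Fin κ) ℕ)
    (hM : ∃ r, IsVPartition n r ∧ AMat r = M)
    (hMne : M ≠ Matrix.of fun α β => n α * n β) :
    (lamSet b n M).Finite ∧ (lamSet b n M).Nonempty ∧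
    (∃ m m' M₁ M₂ : _, m + m' = n ∧ m ≠ 0 ∧ m' ≠ 0 ∧
        (∃ r₁, IsVPartition m r₁ ∧ AMat r₁ = M₁) ∧
        (∃ r₂, IsVPartition m' r₂ ∧ AMat r₂ = M₂) ∧ M₁ + M₂ = M) ∧
    lamB b n M
      = sInf {x | ∃ (m m' : Fin κ → ℕ) (M₁ M₂ : Matrix (Fin κ) (Fin κ) ℕ),
          m + m' = n ∧ m ≠ 0 ∧ m' ≠ 0 ∧
          (∃ r₁, IsVPartition m r₁ ∧ AMat r₁ = M₁) ∧
          (∃ r₂, IsVPartition m' r₂ ∧ AMat r₂ = M₂) ∧ M₁ + M₂ = M ∧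
          x = lamB b m M₁ + lamB b m' M₂} := by
  obtain ⟨r, hr, hA⟩ := hM
  have hne : (lamSet b n M).Nonempty := ⟨_, r, hr, hA, rfl⟩
  obtain ⟨r₀, hr₀, hA₀, hw₀⟩ := lamB_mem b hne
  obtain ⟨m, m', r', rfl, hm, hm', hr', rfl⟩ := hr₀.exists_single_add (by rwa [hA₀])
  have h₁ := IsVPartition.single_one hm
  rw [AMat_add] at hA₀
  subst hA₀
  have hsplit : lamB b (m + m') (AMat (single m 1) + AMat r')
      = lamB b m (AMat (single m 1)) + lamB b m' (AMat r') := by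
    refine le_antisymm (lamB_add_le b ⟨_, _, h₁, rfl, rfl⟩ ⟨_, _, hr', rfl, rfl⟩) ?_
    rw [hw₀, Finsupp.sum_add_natCast_mul]
    exact add_le_add (lamB_le b ⟨_, h₁, rfl, rfl⟩) (lamB_le b ⟨_, hr', rfl, rfl⟩)
  refine ⟨lamSet_finite b _ _, hne,
    ⟨m, m', _, _, rfl, hm, hm', ⟨_, h₁, rfl⟩, ⟨_, hr', rfl⟩, rfl⟩, ?_⟩
  refine (IsLeast.csInf_eq ⟨?_, ?_⟩).symm
  · exact ⟨m, m', _, _, rfl, hm, hm', ⟨_, h₁, rfl⟩, ⟨_, hr', rfl⟩, rfl, hsplit⟩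
  · rintro x ⟨k, k', M₁, M₂, hk, -, -, ⟨r₁, h₁, hA₁⟩, ⟨r₂, h₂, hA₂⟩, hM, rfl⟩
    rw [← hk, ← hM]
    exact lamB_add_le b ⟨_, r₁, h₁, hA₁, rfl⟩ ⟨_, r₂, h₂, hA₂, rfl⟩

/-- Recursion for the class exponents `λ_b`: for `M` an `A`-matrix of a partition of `n`
with `M ≠ n⊗n`, the defining set of `λ_b(n, M)` is finite and nonempty, the set of
decompositions `D(M)` is nonempty, and `λ_b(n, M)` is the minimum of
`λ_b(m, M₁) + λ_b(m', M₂)` over `D(M)`. -/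
theorem lamB_recursion {κ : ℕ} (hκ : 1 ≤ κ) (b : (Fin κ → ℕ) → ℝ)
    (n : Fin κ → ℕ) (hn : n ≠ 0) (M : Matrix (Fin κ) (Fin κ) ℕ)
    (hM : ∃ r, IsVPartition n r ∧ AMat r = M)
    (hMne : M ≠ Matrix.of fun α β => n α * n β) :
    (lamSet b n M).Finite ∧ (lamSet b n M).Nonempty ∧
    (∃ m m' M₁ M₂ : _, m + m' = n ∧ m ≠ 0 ∧ m' ≠ 0 ∧
        (∃ r₁, IsVPartition m r₁ ∧ AMat r₁ = M₁) ∧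
        (∃ r₂, IsVPartition m' r₂ ∧ AMat r₂ = M₂) ∧ M₁ + M₂ = M) ∧
    lamB b n M
      = sInf {x | ∃ (m m' : Fin κ → ℕ) (M₁ M₂ : Matrix (Fin κ) (Fin κ) ℕ),
          m + m' = n ∧ m ≠ 0 ∧ m' ≠ 0 ∧
          (∃ r₁, IsVPartition m r₁ ∧ AMat r₁ = M₁) ∧
          (∃ r₂, IsVPartition m' r₂ ∧ AMat r₂ = M₂) ∧ M₁ + M₂ = M ∧
          x = lamB b m M₁ + lamB b m' M₂} :=
  lamB_recursion_general b n M hM hMne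
end
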